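/- arXiv:1506.04428 — 6 statements merged into one kernel-verified Lean document; each statement's English description precedes it below -/
import Mathlib

section
/- There exist universal constants C and c > 0 such that for all sufficiently large n the following holds with k = ⌈(log₂ n)^C⌉ and m = ⌈k^c⌉: there exists a function D : {0,1}^n × {0,1}^n → {0,1}^m such that for every pair of independent (n,k)-sources X and Y, the support of D(X,Y) is all of {0,1}^m (a two-source zero-error disperser for entropy k with m output bits). -/
/-- Bit strings of length `n`. -/
abbrev BitStr (n : ℕ) := Fin n → Bool

/-- The probability that a sample from `X` lands in the set `A`. -/
noncomputable def prSet {α : Type*} [Fintype α] (X : α → ℝ) (A : Set α) : ℝ :=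
  ∑ x, A.indicator X x

/-- `X` is a (finitely supported) probability distribution. -/
def IsDist {α : Type*} [Fintype α] (X : α → ℝ) : Prop :=
  (∀ x, 0 ≤ X x) ∧ ∑ x, X x = 1

/-- `X` has min-entropy at least `k`, i.e. every point has probability at most `2 ^ (-k)`. -/
def MinEntropyGe {α : Type*} [Fintype α] (X : α → ℝ) (k : ℝ) : Prop :=
  ∀ x, X x ≤ (2 : ℝ) ^ (-k)

/-- The distribution of `X` conditioned on the event `A`. -/
noncomputable def CondOn {α : Type*} [Fintype α] (X : α → ℝ) (A : Set α) : α → ℝ :=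
  fun x => A.indicator X x / prSet X A

/-- `X'` is a deficiency-`d` subsource of `X`. -/
def IsSubsource {α : Type*} [Fintype α] (X' X : α → ℝ) (d : ℝ) : Prop :=
  ∃ A : Set α, (2 : ℝ) ^ (-d) ≤ prSet X A ∧ X' = CondOn X A

/-- `X'` is a subsource of `X` (conditioning on some positive-probability event). -/
def IsSubsourceAny {α : Type*} [Fintype α] (X' X : α → ℝ) : Prop :=
  ∃ A : Set α, 0 < prSet X A ∧ X' = CondOn X A

/-- `X` is `ε`-close to `Y` in statistical distance. -/
def CloseTo {α : Type*} [Fintype α] (X Y : α → ℝ) (ε : ℝ) : Prop :=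
  ∀ A : Set α, |prSet X A - prSet Y A| ≤ ε

/-- The uniform distribution on `α`. -/
noncomputable def uniformDist (α : Type*) [Fintype α] : α → ℝ :=
  fun _ => 1 / Fintype.card α

/-- The joint distribution of independent samples from `X` and `Y`. -/
noncomputable def jointDist {α β : Type*} (X : α → ℝ) (Y : β → ℝ) : α × β → ℝ :=
  fun p => X p.1 * Y p.2

/-- The distribution of `f x` where `x ~ X`. -/
noncomputable def pushDist {α β : Type*} [Fintype α] [DecidableEq β]
    (f : α → β) (X : α → ℝ) : β → ℝ :=
  fun b => ∑ x, if f x = b then X x else 0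

/-- The distribution of `f x y` where `x ~ X` and `y ~ Y` independently. -/
noncomputable def jointPush {α β γ : Type*} [Fintype α] [Fintype β] [DecidableEq γ]
    (f : α → β → γ) (X : α → ℝ) (Y : β → ℝ) : γ → ℝ :=
  pushDist (fun p => f p.1 p.2) (jointDist X Y)

/-- The left half (length-`n/2` prefix) of a bit string. -/
def leftHalf {n : ℕ} (x : BitStr n) : BitStr (n / 2) :=
  fun i => x ⟨i.1, by have := i.isLt; omega⟩

/-- The right half (length-`n/2` suffix, for even `n`) of a bit string. -/
def rightHalf {n : ℕ} (x : BitStr n) : BitStr (n / 2) :=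
  fun i => x ⟨n / 2 + i.1, by have := i.isLt; omega⟩

/-- The distribution of the left half of a sample from `X`. -/
noncomputable def margL {n : ℕ} (X : BitStr n → ℝ) : BitStr (n / 2) → ℝ :=
  pushDist leftHalf X

/-- The distribution of the right half of a sample from `X`. -/
noncomputable def margR {n : ℕ} (X : BitStr n → ℝ) : BitStr (n / 2) → ℝ :=
  pushDist rightHalf X

/-- The probability that the left half equals `a` and the right half equals `r`. -/
noncomputable def jointLR {n : ℕ} (X : BitStr n → ℝ) (a r : BitStr (n / 2)) : ℝ :=
  ∑ x, if leftHalf x = a ∧ rightHalf x = r then X x else 0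

/-- `X` is a `b`-block-source: its left half has min-entropy at least `b`, and
conditioned on any value of the left half in its support, the right half has
min-entropy at least `b`. -/
def IsBlockSource {n : ℕ} (X : BitStr n → ℝ) (b : ℝ) : Prop :=
  MinEntropyGe (margL X) b ∧
  ∀ a, 0 < margL X a → ∀ r, jointLR X a r ≤ (2 : ℝ) ^ (-b) * margL X a

/-- The distribution of the right half conditioned on the left half being `a`. -/
noncomputable def condRight {n : ℕ} (X : BitStr n → ℝ) (a : BitStr (n / 2)) :
    BitStr (n / 2) → ℝ :=
  fun r => jointLR X a r / margL X a

/-- The min-entropy of `X`: `-log₂` of the largest point probability. -/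
noncomputable def minEntropyVal {α : Type*} [Fintype α] [Nonempty α] (X : α → ℝ) : ℝ :=
  - Real.logb 2 (⨆ x, X x)

/-- An independent set in a simple graph: a set of pairwise non-adjacent vertices. -/
def SimpleGraph.IsIndepSet' {V : Type*} (G : SimpleGraph V) (s : Set V) : Prop :=
  s.Pairwise (fun a b => ¬ G.Adj a b)



set_option maxRecDepth 8000

open Finset in

private lemma two_mul_pow_le' (M : ℕ) (hM : 2 ≤ M) : 2 * (M - 1) ^ M ≤ M ^ M := by
  have h2 : (2:ℝ) ≤ (M:ℝ) := by exact_mod_cast hM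
  have hpos : (0:ℝ) < (M:ℝ) - 1 := by linarith
  have hb : (1 : ℝ) + (M:ℕ) * (1 / ((M:ℝ) - 1)) ≤ (1 + 1/((M:ℝ)-1)) ^ (M:ℕ) := by
    apply one_add_mul_le_pow
    have : (0:ℝ) ≤ 1 / ((M:ℝ)-1) := by positivity
    linarith
  have h1 : (1:ℝ) ≤ (M:ℝ) * (1/((M:ℝ)-1)) := by
    rw [mul_one_div, le_div_iff₀ hpos]; linarith
  have h3 : ((1:ℝ) + 1/((M:ℝ)-1)) = (M:ℝ)/((M:ℝ)-1) := by field_simp; ring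
  have h4 : (2:ℝ) ≤ ((M:ℝ)/((M:ℝ)-1)) ^ (M:ℕ) := by
    rw [← h3]; refine le_trans (by linarith) hb
  rw [div_pow, le_div_iff₀ (by positivity)] at h4
  have : (2:ℝ) * ((M:ℝ)-1) ^ (M:ℕ) ≤ (M:ℝ) ^ (M:ℕ) := by linarith
  have hcast : ((M - 1 : ℕ) : ℝ) = (M:ℝ) - 1 := by
    push_cast [Nat.cast_sub (by omega : 1 ≤ M)]; ring
  exact_mod_cast hcast ▸ this

open Finset in
private lemma exists_good_fun (n m k : ℕ) (hm : 1 ≤ m) (hmk : m ≤ 2 * k)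
    (hkn : k ≤ n) (hnum : 2 * n * 2 ^ k + m < 2 ^ (2 * k - m)) :
    ∃ D : BitStr n → BitStr n → BitStr m,
      ∀ A B : Finset (BitStr n), A.card = 2 ^ k → B.card = 2 ^ k →
        ∀ z : BitStr m, ∃ x ∈ A, ∃ y ∈ B, D x y = z := by
  classical
  set s := 2 ^ k with hs
  set M := 2 ^ m with hM
  have hM2 : 2 ≤ M := by
    calc 2 = 2 ^ 1 := rfl
    _ ≤ M := Nat.pow_le_pow_right (by norm_num) hm
  have hMcard : Fintype.card (BitStr m) = M := by simp [BitStr, hM]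
  set cardP := Fintype.card (BitStr n × BitStr n) with hcardP
  have hcardPval : cardP = 2 ^ n * 2 ^ n := by simp [hcardP, BitStr]
  have hss : s * s ≤ cardP := by
    rw [hcardPval]
    exact Nat.mul_le_mul (Nat.pow_le_pow_right (by norm_num) hkn)
      (Nat.pow_le_pow_right (by norm_num) hkn)
  set T := ((univ : Finset (BitStr n)).powersetCard s) ×ˢ
    (((univ : Finset (BitStr n)).powersetCard s) ×ˢ (univ : Finset (BitStr m))) with hT
  set badOf : Finset (BitStr n) × Finset (BitStr n) × BitStr m →
      Finset (BitStr n × BitStr n → BitStr m) :=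
    fun t => Fintype.piFinset fun p =>
      if p ∈ t.1 ×ˢ t.2.1 then (univ : Finset (BitStr m)).erase t.2.2 else univ with hbadOf
  set bad := T.biUnion badOf with hbad
  -- card of each bad set
  have hbadcard : ∀ t ∈ T, (badOf t).card = (M-1)^(s*s) * M ^ (cardP - s*s) := by
    rintro ⟨A, B, z⟩ ht
    simp only [hT, mem_product, mem_powersetCard_univ, mem_univ, and_true] at ht
    obtain ⟨hA, hB⟩ := ht
    rw [hbadOf]
    rw [Fintype.card_piFinset]
    simp only [apply_ite Finset.card, card_erase_of_mem (mem_univ _), card_univ, hMcard]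
    rw [Finset.prod_ite, Finset.prod_const, Finset.prod_const]
    have e1 : (univ.filter (fun p => p ∈ A ×ˢ B)) = A ×ˢ B := by
      ext p; simp
    have e2 : (univ.filter (fun p => ¬ p ∈ A ×ˢ B)) = univ \ (A ×ˢ B) := by
      ext p; simp
    rw [e1, e2, card_sdiff_of_subset (subset_univ _), card_univ, card_product, hA, hB]
  -- card of T
  have hTcard : T.card ≤ 2 ^ (n*s) * 2 ^ (n*s) * M := by
    rw [hT, card_product, card_product, card_powersetCard, card_univ, card_univ]
    have hc : Fintype.card (BitStr n) = 2 ^ n := by simp [BitStr]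
    rw [hc, hMcard]
    have hch : (2^n).choose s ≤ 2 ^ (n*s) := by
      calc (2^n).choose s ≤ (2^n)^s := Nat.choose_le_pow _ _
      _ = 2 ^ (n*s) := by rw [← pow_mul]
    calc (2^n).choose s * ((2^n).choose s * M)
        ≤ 2^(n*s) * (2^(n*s) * M) := by
          exact Nat.mul_le_mul hch (Nat.mul_le_mul hch le_rfl)
      _ = 2^(n*s) * 2^(n*s) * M := by ring
  -- key inequality
  set t := 2 ^ (2*k - m) with ht
  have hst : s * s = M * t := by
    rw [hs, hM, ht, ← pow_add, ← pow_add]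
    congr 1; omega
  have hkey : 2 ^ t * (M-1)^(s*s) ≤ M ^ (s*s) := by
    rw [hst, pow_mul, pow_mul]
    calc 2 ^ t * ((M-1)^M)^t = (2 * (M-1)^M)^t := by rw [mul_pow]
      _ ≤ (M^M)^t := Nat.pow_le_pow_left (two_mul_pow_le' M hM2) t
  have hmain : 2^(n*s) * 2^(n*s) * M * ((M-1)^(s*s) * M^(cardP - s*s)) < M ^ cardP := by
    have hMpos : 0 < M := by omega
    have hstep : 2^(n*s) * 2^(n*s) * M * (M-1)^(s*s) < M ^ (s*s) := by
      have hlhs : 2^(n*s) * 2^(n*s) * M = 2 ^ (n*s + n*s + m) := by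
        rw [hM, ← pow_add, ← pow_add]
      rw [hlhs]
      have hexp : n*s + n*s + m < t := by
        have h2 : n*s + n*s + m = 2*n*s + m := by ring
        rw [h2]; exact hnum
      calc 2 ^ (n*s+n*s+m) * (M-1)^(s*s)
          < 2 ^ t * (M-1)^(s*s) := by
            exact (Nat.mul_lt_mul_right (Nat.pow_pos (by omega))).mpr
              (Nat.pow_lt_pow_right (by norm_num) hexp)
        _ ≤ M ^ (s*s) := hkey
    calc 2^(n*s) * 2^(n*s) * M * ((M-1)^(s*s) * M^(cardP - s*s))
        = (2^(n*s) * 2^(n*s) * M * (M-1)^(s*s)) * M^(cardP - s*s) := by ring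
      _ < M ^ (s*s) * M^(cardP - s*s) := by
          exact (Nat.mul_lt_mul_right (Nat.pow_pos hMpos)).mpr hstep
      _ = M ^ cardP := by rw [← pow_add]; congr 1; omega
  have hbadlt : bad.card < M ^ cardP := by
    calc bad.card ≤ ∑ x ∈ T, (badOf x).card := card_biUnion_le
      _ = ∑ _x ∈ T, ((M-1)^(s*s) * M ^ (cardP - s*s)) := Finset.sum_congr rfl hbadcard
      _ = T.card * ((M-1)^(s*s) * M ^ (cardP - s*s)) := by rw [Finset.sum_const, smul_eq_mul]
      _ ≤ 2^(n*s) * 2^(n*s) * M * ((M-1)^(s*s) * M ^ (cardP - s*s)) :=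
          Nat.mul_le_mul_right _ hTcard
      _ < M ^ cardP := hmain
  obtain ⟨D', hD'⟩ : ∃ D' : BitStr n × BitStr n → BitStr m, D' ∉ bad := by
    by_contra hcon
    push_neg at hcon
    have hsub : (univ : Finset (BitStr n × BitStr n → BitStr m)) ⊆ bad := fun x _ => hcon x
    have := card_le_card hsub
    rw [card_univ, Fintype.card_fun, hMcard, ← hcardP] at this
    omega
  refine ⟨fun x y => D' (x, y), ?_⟩
  intro A B hA hB z
  by_contra hcon
  push_neg at hcon
  apply hD'
  rw [hbad]
  refine mem_biUnion.mpr ⟨⟨A, B, z⟩, ?_, ?_⟩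
  · simp [hT, mem_powersetCard_univ, hA, hB]
  · rw [hbadOf, Fintype.mem_piFinset]
    intro p
    by_cases hp : p ∈ A ×ˢ B
    · simp only [hp, if_true, mem_erase]
      refine ⟨?_, mem_univ _⟩
      have := hcon p.1 (mem_product.mp hp).1 p.2 (mem_product.mp hp).2
      simpa using this
    · simp [hp]

open Finset in
private lemma support_card_ge (n k : ℕ) (X : BitStr n → ℝ) (hX : IsDist X)
    (hE : MinEntropyGe X k) :
    2 ^ k ≤ (univ.filter (fun x => X x ≠ 0)).card := by
  classical
  have hsum : ∑ x ∈ univ.filter (fun x => X x ≠ 0), X x = 1 := by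
    rw [← hX.2]
    exact Finset.sum_filter_ne_zero _
  have hbnd : ∀ x, X x ≤ ((2:ℝ)^k)⁻¹ := by
    intro x
    have := hE x
    rwa [Real.rpow_neg (by norm_num), Real.rpow_natCast] at this
  have hle : (1:ℝ) ≤ (univ.filter (fun x => X x ≠ 0)).card * ((2:ℝ)^k)⁻¹ := by
    rw [← hsum]
    calc ∑ x ∈ univ.filter (fun x => X x ≠ 0), X x
        ≤ ∑ _x ∈ univ.filter (fun x => X x ≠ 0), ((2:ℝ)^k)⁻¹ :=
          Finset.sum_le_sum (fun x _ => hbnd x)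
      _ = _ := by rw [Finset.sum_const, nsmul_eq_mul]
  have hpow : (0:ℝ) < (2:ℝ)^k := by positivity
  have h2 : (1:ℝ) * (2:ℝ)^k ≤ ((univ.filter (fun x => X x ≠ 0)).card * ((2:ℝ)^k)⁻¹) * (2:ℝ)^k :=
    mul_le_mul_of_nonneg_right hle hpow.le
  rw [one_mul, mul_assoc, inv_mul_cancel₀ hpow.ne', mul_one] at h2
  exact_mod_cast h2


open Finset in
private lemma numerics (n : ℕ) (hn : 2 ^ 100 ≤ n) (k m : ℕ)
    (hk : k = ⌈Real.logb 2 n ^ 2⌉₊) (hm : m = ⌈(k : ℝ) ^ ((1:ℝ)/2)⌉₊) :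
    1 ≤ m ∧ m ≤ 2 * k ∧ k ≤ n ∧ 2 * n * 2 ^ k + m < 2 ^ (2 * k - m) := by
  set a := Nat.log 2 n with ha
  have hn0 : 0 < n := lt_of_lt_of_le (by positivity) hn
  have hn0' : (0:ℝ) < (n:ℝ) := by exact_mod_cast hn0
  have ha100 : 100 ≤ a := by
    rw [ha]
    exact (Nat.le_log_iff_pow_le (by norm_num) (by omega)).mpr hn
  have hpowa : 2 ^ a ≤ n := Nat.pow_log_le_self 2 (by omega)
  have hnlt : n < 2 ^ (a + 1) := Nat.lt_pow_succ_log_self (by norm_num) n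
  set L := Real.logb 2 n with hL
  have haL : (a : ℝ) ≤ L := by
    rw [hL]
    rw [Real.le_logb_iff_rpow_le one_lt_two hn0']
    rw [Real.rpow_natCast]
    exact_mod_cast hpowa
  have hLa : L < (a : ℝ) + 1 := by
    rw [hL, show ((a:ℝ) + 1) = ((a+1 : ℕ) : ℝ) by push_cast; ring]
    rw [Real.logb_lt_iff_lt_rpow one_lt_two hn0', Real.rpow_natCast]
    exact_mod_cast hnlt
  have hL0 : 0 ≤ L := le_trans (by positivity) haL
  have hk_ge : a ^ 2 ≤ k := by
    have h2 : ((a^2 : ℕ) : ℝ) ≤ (k : ℝ) := by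
      push_cast
      calc ((a:ℝ))^2 ≤ L^2 := by nlinarith
        _ ≤ (⌈L^2⌉₊ : ℝ) := Nat.le_ceil _
        _ = (k:ℝ) := by rw [hk]
    exact_mod_cast h2
  have hk_le : k ≤ (a+1)^2 := by
    have h1 : (k : ℝ) < ((a:ℝ)+1)^2 + 1 := by
      rw [hk]
      calc ((⌈L^2⌉₊ : ℕ) : ℝ) < L^2 + 1 := Nat.ceil_lt_add_one (by positivity)
        _ ≤ ((a:ℝ)+1)^2 + 1 := by nlinarith
    have h2 : (k:ℝ) < (((a+1)^2 + 1 : ℕ) : ℝ) := by push_cast; push_cast at h1; linarith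
    have := Nat.cast_lt.mp h2
    omega
  have hk_pos : 1 ≤ k := by nlinarith [hk_ge, ha100]
  have hm_ge : 1 ≤ m := by
    rw [hm]
    have : (0:ℝ) < (k:ℝ) ^ ((1:ℝ)/2) := by
      apply Real.rpow_pos_of_pos
      exact_mod_cast hk_pos
    exact Nat.one_le_iff_ne_zero.mpr (by positivity)
  have hm_le : m ≤ a + 2 := by
    have h1 : (k:ℝ) ^ ((1:ℝ)/2) ≤ ((a:ℝ)+2) := by
      have hkle : (k:ℝ) ≤ ((a:ℝ)+2)^2 := by
        have h3 : (k:ℝ) ≤ (((a+1)^2 : ℕ) : ℝ) := by exact_mod_cast hk_le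
        push_cast at h3 ⊢
        nlinarith
      calc (k:ℝ) ^ ((1:ℝ)/2) ≤ (((a:ℝ)+2)^2) ^ ((1:ℝ)/2) :=
            Real.rpow_le_rpow (by positivity) hkle (by norm_num)
        _ = ((a:ℝ)+2) := by
            rw [← Real.rpow_natCast ((a:ℝ)+2) 2, ← Real.rpow_mul (by positivity)]
            norm_num
    rw [hm]
    calc ⌈(k:ℝ)^((1:ℝ)/2)⌉₊ ≤ ⌈((a:ℝ)+2)⌉₊ := Nat.ceil_le_ceil h1
      _ = a + 2 := by
        rw [show ((a:ℝ)+2) = ((a+2 : ℕ) : ℝ) by push_cast; ring, Nat.ceil_natCast]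
  have hsq : (a+1)^2 ≤ 2^a := by
    clear * - ha100
    have key : ∀ b : ℕ, (b+7+1)^2 ≤ 2^(b+7) := by
      intro b
      induction b with
      | zero => norm_num
      | succ c ih =>
        have h2 : (c+1+7+1)^2 ≤ 2 * (c+7+1)^2 := by
          have e1 : (c+1+7+1)^2 = c^2 + 18*c + 81 := by ring
          have e2 : 2*(c+7+1)^2 = 2*c^2 + 32*c + 128 := by ring
          have e3 : c^2 ≥ 0 := Nat.zero_le _
          omega
        calc (c+1+7+1)^2 ≤ 2*(c+7+1)^2 := h2
          _ ≤ 2 * 2^(c+7) := by omega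
          _ = 2^(c+1+7) := by ring
    have := key (a - 7)
    rwa [show a - 7 + 7 = a by omega] at this
  refine ⟨hm_ge, by nlinarith, le_trans (le_trans hk_le hsq) hpowa, ?_⟩
  have hmk' : m + a + 3 ≤ k := by nlinarith
  have h2n : 2*n < 2^(a+2) := by
    have : 2^(a+2) = 2*2^(a+1) := by ring
    omega
  have hmlt : m < 2^(a+2)*2^k := by
    have h1 : m < 2^(a+2) := lt_of_le_of_lt hm_le (by
      calc a + 2 < 2^(a+2) := Nat.lt_two_pow_self
      )
    calc m < 2^(a+2) := h1
      _ ≤ 2^(a+2)*2^k := Nat.le_mul_of_pos_right _ (Nat.pow_pos (by norm_num))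
  have hstep : 2*n*2^k < 2^(a+2)*2^k :=
    (Nat.mul_lt_mul_right (Nat.pow_pos (by norm_num))).mpr h2n
  calc 2*n*2^k + m < 2^(a+2)*2^k + 2^(a+2)*2^k := by omega
    _ = 2^(a+3+k) := by rw [← pow_add]; ring
    _ ≤ 2^(2*k-m) := Nat.pow_le_pow_right (by norm_num) (by omega)


/-- Two-source zero-error dispersers for polylogarithmic entropy
`k = ⌈(log₂ n)^C⌉` with `m = ⌈k^c⌉` output bits. -/
theorem two_source_zero_error_disperser :
    ∃ (C : ℕ) (c : ℝ), 0 < C ∧ 0 < c ∧ ∃ N : ℕ, ∀ n : ℕ, N ≤ n →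
      ∀ k m : ℕ, k = ⌈Real.logb 2 n ^ C⌉₊ → m = ⌈(k : ℝ) ^ c⌉₊ →
        ∃ D : BitStr n → BitStr n → BitStr m,
          ∀ X Y : BitStr n → ℝ, IsDist X → IsDist Y →
            MinEntropyGe X k → MinEntropyGe Y k →
            ∀ z : BitStr m, ∃ x y, X x ≠ 0 ∧ Y y ≠ 0 ∧ D x y = z := by
  classical
  refine ⟨2, 1/2, by norm_num, by norm_num, 2^100, ?_⟩
  intro n hn k m hk hm
  obtain ⟨hm1, hmk, hkn, hnum⟩ := numerics n hn k m hk hm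
  obtain ⟨D, hD⟩ := exists_good_fun n m k hm1 hmk hkn hnum
  refine ⟨D, ?_⟩
  intro X Y hX hY hEX hEY z
  obtain ⟨A, hAsub, hAcard⟩ :=
    Finset.exists_subset_card_eq (support_card_ge n k X hX hEX)
  obtain ⟨B, hBsub, hBcard⟩ :=
    Finset.exists_subset_card_eq (support_card_ge n k Y hY hEY)
  obtain ⟨x, hx, y, hy, hxy⟩ := hD A B hAcard hBcard z
  refine ⟨x, y, ?_, ?_, hxy⟩
  · exact (Finset.mem_filter.mp (hAsub hx)).2
  · exact (Finset.mem_filter.mp (hBsub hy)).2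
end

section
/- Let n be even and let X be an (n,k)-source with k − √k − 1 > n/2. Then there exists a deficiency-1 subsource X' of X such that X' is a √k-block-source. (In particular, any source on n bits with min-entropy rate strictly above roughly 1/2, e.g. min-entropy 0.6n for large n, has a deficiency-1 subsource that is a block-source.) -/
section Helpers

variable {n : ℕ}

/-- Glue two half-strings into a full string (needs `n/2 + n/2 = n`). -/
def glue (h2 : n / 2 + n / 2 = n) (a r : BitStr (n / 2)) : BitStr n :=
  fun i => if h : (i : ℕ) < n / 2 then a ⟨i, h⟩
    else r ⟨(i : ℕ) - n / 2, by have := i.isLt; omega⟩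

lemma leftHalf_glue (h2 : n / 2 + n / 2 = n) (a r : BitStr (n / 2)) :
    leftHalf (glue h2 a r) = a := by
  funext i
  simp only [leftHalf, glue]
  rw [dif_pos i.isLt]

lemma rightHalf_glue (h2 : n / 2 + n / 2 = n) (a r : BitStr (n / 2)) :
    rightHalf (glue h2 a r) = r := by
  funext i
  simp only [rightHalf, glue]
  rw [dif_neg (by omega)]
  congr 1
  apply Fin.ext
  simp

lemma glue_halves (h2 : n / 2 + n / 2 = n) (x : BitStr n) :
    glue h2 (leftHalf x) (rightHalf x) = x := by
  funext i
  simp only [glue, leftHalf, rightHalf]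
  split
  · congr 1
  · congr 1
    apply Fin.ext
    simp
    omega

lemma halves_iff (h2 : n / 2 + n / 2 = n) (x : BitStr n) (a r : BitStr (n / 2)) :
    (leftHalf x = a ∧ rightHalf x = r) ↔ x = glue h2 a r := by
  constructor
  · rintro ⟨ha, hr⟩
    rw [← ha, ← hr, glue_halves]
  · rintro rfl
    exact ⟨leftHalf_glue h2 a r, rightHalf_glue h2 a r⟩

lemma jointLR_glue (h2 : n / 2 + n / 2 = n) (X : BitStr n → ℝ) (a r : BitStr (n / 2)) :
    jointLR X a r = X (glue h2 a r) := by
  classical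
  unfold jointLR
  rw [Finset.sum_congr rfl fun x _ => if_congr (halves_iff h2 x a r) rfl rfl]
  simp

lemma margL_apply {n : ℕ} (X : BitStr n → ℝ) (a : BitStr (n / 2)) :
    margL X a = ∑ x, if leftHalf x = a then X x else 0 := rfl

lemma margL_eq (h2 : n / 2 + n / 2 = n) (X : BitStr n → ℝ) (a : BitStr (n / 2)) :
    margL X a = ∑ r, X (glue h2 a r) := by
  classical
  calc margL X a = ∑ x, if leftHalf x = a then X x else 0 := rfl
    _ = ∑ x, ∑ r, if leftHalf x = a ∧ rightHalf x = r then X x else 0 := by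
        refine Finset.sum_congr rfl fun x _ => ?_
        by_cases h : leftHalf x = a <;> simp [h]
    _ = ∑ r, ∑ x, if leftHalf x = a ∧ rightHalf x = r then X x else 0 := Finset.sum_comm
    _ = ∑ r, X (glue h2 a r) := by
        refine Finset.sum_congr rfl fun r _ => ?_
        exact jointLR_glue h2 X a r

lemma sum_margL {n : ℕ} (X : BitStr n → ℝ) :
    ∑ a, margL X a = ∑ x, X x := by
  classical
  simp only [margL_apply]
  rw [Finset.sum_comm]
  simp

end Helpers

/-- Any `(n,k)`-source with `k - √k - 1 > n/2` has a deficiency-1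
subsource that is a `√k`-block-source. -/
theorem high_entropy_gives_block_source (n : ℕ) (hn : Even n) (k : ℝ)
    (X : BitStr n → ℝ) (hX : IsDist X) (hk : MinEntropyGe X k)
    (hhigh : (n : ℝ) / 2 < k - Real.sqrt k - 1) :
    ∃ X' : BitStr n → ℝ, IsSubsource X' X 1 ∧ IsBlockSource X' (Real.sqrt k) := by
  classical
  obtain ⟨t, ht⟩ := hn
  have h2 : n / 2 + n / 2 = n := by omega
  obtain ⟨hXnn, hXsum⟩ := hX
  set b := Real.sqrt k with hbdef
  have hbnn : 0 ≤ b := Real.sqrt_nonneg k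
  have hnn : (0:ℝ) ≤ (n:ℝ)/2 := by positivity
  set s : ℝ := k - b with hsdef
  set H : Set (BitStr (n/2)) := {a | (2:ℝ)^(-s) ≤ margL X a} with hH
  set A : Set (BitStr n) := {x | leftHalf x ∈ H} with hA
  have hmemA : ∀ x : BitStr n, x ∈ A ↔ leftHalf x ∈ H := fun x => Iff.rfl
  -- cardinality
  have hcardN : Fintype.card (BitStr (n/2)) = 2 ^ (n/2) := by
    simp [BitStr]
  have hhalf : ((n/2 : ℕ) : ℝ) = (n:ℝ)/2 := by
    have hnt : n / 2 = t := by omega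
    rw [hnt, ht]; push_cast; ring
  have hcard : (Fintype.card (BitStr (n/2)) : ℝ) = (2:ℝ) ^ ((n:ℝ)/2) := by
    rw [hcardN]; push_cast
    rw [← Real.rpow_natCast 2 (n/2), hhalf]
  -- margL bounds
  have hmargL_nn : ∀ a, 0 ≤ margL X a := by
    intro a
    rw [margL_apply]
    refine Finset.sum_nonneg fun x _ => ?_
    split
    · exact hXnn x
    · exact le_rfl
  have hmargL_le : ∀ a, margL X a ≤ (2:ℝ) ^ ((n:ℝ)/2 - k) := by
    intro a
    rw [margL_eq h2]
    calc ∑ r, X (glue h2 a r) ≤ ∑ _r : BitStr (n/2), (2:ℝ)^(-k) :=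
          Finset.sum_le_sum fun r _ => hk _
      _ = (Fintype.card (BitStr (n/2)) : ℝ) * (2:ℝ)^(-k) := by
          rw [Finset.sum_const, nsmul_eq_mul, Finset.card_univ]
      _ = (2:ℝ) ^ ((n:ℝ)/2 - k) := by
          rw [hcard, ← Real.rpow_add two_pos]; ring_nf
  -- the probability of A
  have hPsum : prSet X A = ∑ a, if a ∈ H then margL X a else 0 := by
    calc prSet X A = ∑ x, if leftHalf x ∈ H then X x else 0 := by
          unfold prSet
          exact Finset.sum_congr rfl fun x _ => by
            rw [Set.indicator_apply]; exact if_congr (hmemA x) rfl rfl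
      _ = ∑ x : BitStr n, ∑ a, if leftHalf x = a then (if a ∈ H then X x else 0) else 0 := by
          refine Finset.sum_congr rfl fun x _ => ?_
          rw [Finset.sum_ite_eq]
          simp
      _ = ∑ a, ∑ x : BitStr n, if leftHalf x = a then (if a ∈ H then X x else 0) else 0 :=
          Finset.sum_comm
      _ = ∑ a, if a ∈ H then margL X a else 0 := by
          refine Finset.sum_congr rfl fun a _ => ?_
          by_cases h : a ∈ H <;> simp [h, margL_apply]
  have hPcompl : 1 - prSet X A = ∑ a, if a ∈ H then 0 else margL X a := by
    have h1 : (∑ a, if a ∈ H then margL X a else 0) + (∑ a, if a ∈ H then 0 else margL X a)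
        = ∑ a, margL X a := by
      rw [← Finset.sum_add_distrib]
      refine Finset.sum_congr rfl fun a _ => ?_
      by_cases h : a ∈ H <;> simp [h]
    rw [sum_margL, hXsum] at h1
    rw [hPsum]; linarith
  have hpow : (2:ℝ) ^ ((n:ℝ)/2) * (2:ℝ) ^ (-s) ≤ 1/2 := by
    rw [← Real.rpow_add two_pos]
    have he : (n:ℝ)/2 + (-s) ≤ -1 := by linarith
    calc (2:ℝ) ^ ((n:ℝ)/2 + (-s)) ≤ (2:ℝ) ^ (-1 : ℝ) :=
          Real.rpow_le_rpow_of_exponent_le one_le_two he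
      _ = 1/2 := by
          rw [Real.rpow_neg (by norm_num), Real.rpow_one]; norm_num
  have hPlow : (1:ℝ)/2 ≤ prSet X A := by
    have hle : ∑ a, (if a ∈ H then 0 else margL X a) ≤ ∑ _a : BitStr (n/2), (2:ℝ)^(-s) := by
      refine Finset.sum_le_sum fun a _ => ?_
      by_cases h : a ∈ H
      · simp only [h, if_true]; positivity
      · simp only [h, if_false]
        have h' : ¬ (2:ℝ)^(-s) ≤ margL X a := h
        exact le_of_lt (not_le.mp h')
    rw [Finset.sum_const, nsmul_eq_mul, Finset.card_univ, hcard] at hle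
    linarith [hPcompl, hpow]
  have hPpos : 0 < prSet X A := lt_of_lt_of_le (by norm_num) hPlow
  have hind_le : ∀ x, A.indicator X x ≤ X x := fun x =>
    Set.indicator_le_self' (fun y _ => hXnn y) x
  have hind_nn : ∀ x, 0 ≤ A.indicator X x := fun x =>
    Set.indicator_nonneg (fun y _ => hXnn y) x
  have hmargL' : ∀ a, margL (CondOn X A) a
      = (∑ x, if leftHalf x = a then A.indicator X x else 0) / prSet X A := by
    intro a
    rw [margL_apply, Finset.sum_div]
    unfold CondOn
    refine Finset.sum_congr rfl fun x _ => ?_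
    split
    · rfl
    · simp
  have hAofH : ∀ a ∈ H, margL (CondOn X A) a = margL X a / prSet X A := by
    intro a ha
    rw [hmargL' a]
    congr 1
    rw [margL_apply]
    refine Finset.sum_congr rfl fun x _ => ?_
    split
    · next h => exact Set.indicator_of_mem ((hmemA x).mpr (h ▸ ha)) X
    · rfl
  have hnotH : ∀ a, a ∉ H → margL (CondOn X A) a = 0 := by
    intro a ha
    rw [hmargL' a, div_eq_zero_iff]
    left
    refine Finset.sum_eq_zero fun x _ => ?_
    split
    · next h =>
        refine Set.indicator_of_notMem (fun hx => ha ?_) X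
        rw [← h]
        exact (hmemA x).mp hx
    · rfl
  refine ⟨CondOn X A, ⟨A, ?_, rfl⟩, ?_, ?_⟩
  · have h12 : (2:ℝ)^(-(1:ℝ)) = 1/2 := by
      rw [Real.rpow_neg (by norm_num), Real.rpow_one]; norm_num
    rw [h12]; exact hPlow
  · -- min-entropy of the left half
    intro a
    have hS : (∑ x, if leftHalf x = a then A.indicator X x else 0) ≤ margL X a := by
      rw [margL_apply]
      refine Finset.sum_le_sum fun x _ => ?_
      split
      · exact hind_le x
      · exact le_rfl
    have h1 : margL (CondOn X A) a ≤ margL X a / prSet X A := by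
      rw [hmargL' a]
      gcongr
    have h3 : margL X a / prSet X A ≤ (2:ℝ)^((n:ℝ)/2 - k) * 2 := by
      rw [div_le_iff₀ hPpos]
      nlinarith [hmargL_le a, hmargL_nn a, hPlow,
        Real.rpow_nonneg (le_of_lt two_pos) ((n:ℝ)/2 - k)]
    have h4 : (2:ℝ)^((n:ℝ)/2 - k) * 2 ≤ (2:ℝ)^(-b) := by
      have he : (2:ℝ)^((n:ℝ)/2 - k) * 2 = (2:ℝ)^((n:ℝ)/2 - k + 1) := by
        rw [Real.rpow_add two_pos, Real.rpow_one]
      rw [he]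
      exact Real.rpow_le_rpow_of_exponent_le one_le_two (by linarith)
    linarith
  · -- conditional min-entropy of the right half
    intro a ha r
    have haH : a ∈ H := by
      by_contra hcon
      rw [hnotH a hcon] at ha
      exact lt_irrefl 0 ha
    have hma : (2:ℝ)^(-s) ≤ margL X a := haH
    have hjoint : jointLR (CondOn X A) a r ≤ (2:ℝ)^(-k) / prSet X A := by
      rw [jointLR_glue h2]
      unfold CondOn
      have hle : A.indicator X (glue h2 a r) ≤ (2:ℝ)^(-k) := le_trans (hind_le _) (hk _)
      gcongr
    have key : (2:ℝ)^(-k) ≤ (2:ℝ)^(-b) * margL X a := by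
      have he : (2:ℝ)^(-k) = (2:ℝ)^(-b) * (2:ℝ)^(-s) := by
        rw [← Real.rpow_add two_pos]
        congr 1
        rw [hsdef]; ring
      rw [he]
      exact mul_le_mul_of_nonneg_left hma (by positivity)
    rw [hAofH a haH]
    calc jointLR (CondOn X A) a r ≤ (2:ℝ)^(-k) / prSet X A := hjoint
      _ ≤ ((2:ℝ)^(-b) * margL X a) / prSet X A := by gcongr
      _ = (2:ℝ)^(-b) * (margL X a / prSet X A) := by ring
end

section
/- Let f : {0,1}^n × {0,1}^n → {0,1}^m be a two-source sub-extractor for outer-entropy k_out and inner-entropy k_in ≥ 0 with error ε, and let m' ≤ m be such that ε < 2^{-m'}. Then the function g : {0,1}^n × {0,1}^n → {0,1}^{m'} obtained by truncating f to its first m' output bits is a two-source zero-error disperser for entropy k_out: for any two independent (n,k_out)-sources X, Y, the support of g(X,Y) equals {0,1}^{m'}. -/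
/-- Truncating a two-source sub-extractor with error `ε < 2^{-m'}` to
its first `m'` output bits yields a two-source zero-error disperser for entropy `k_out`. -/
theorem sub_extractor_to_disperser (n m m' : ℕ) (kout kin ε : ℝ)
    (hkin : 0 ≤ kin) (hm' : m' ≤ m) (hε : ε < (2 : ℝ) ^ (-(m' : ℝ)))
    (f : BitStr n → BitStr n → BitStr m)
    (hsub : ∀ X Y : BitStr n → ℝ, IsDist X → IsDist Y →
      MinEntropyGe X kout → MinEntropyGe Y kout →
      ∃ X' Y' : BitStr n → ℝ,
        IsSubsourceAny X' X ∧ IsSubsourceAny Y' Y ∧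
        MinEntropyGe X' kin ∧ MinEntropyGe Y' kin ∧
        CloseTo (jointPush f X' Y') (uniformDist (BitStr m)) ε) :
    ∀ X Y : BitStr n → ℝ, IsDist X → IsDist Y →
      MinEntropyGe X kout → MinEntropyGe Y kout →
      ∀ z : BitStr m', ∃ x y, X x ≠ 0 ∧ Y y ≠ 0 ∧
        (fun i : Fin m' => f x y (Fin.castLE hm' i)) = z := by
  classical
  intro X Y hX hY hXk hYk z
  obtain ⟨X', Y', ⟨A₀, hA₀pos, hX'eq⟩, ⟨B₀, hB₀pos, hY'eq⟩, _, _, hclose⟩ :=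
    hsub X Y hX hY hXk hYk
  set A : Set (BitStr m) := {w | (fun i : Fin m' => w (Fin.castLE hm' i)) = z} with hAdef
  set F : Finset (BitStr m) := Finset.univ.filter (· ∈ A) with hF
  -- the embedding filling the last m - m' bits
  set g : (Fin (m - m') → Bool) → BitStr m := fun t i =>
    if h : i.1 < m' then z ⟨i.1, h⟩ else t ⟨i.1 - m', by have := i.isLt; omega⟩ with hg
  have hcard : (2 : ℕ) ^ (m - m') ≤ F.card := by
    have hmaps : ∀ t ∈ (Finset.univ : Finset (Fin (m - m') → Bool)), g t ∈ F := by
      intro t _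
      simp only [hF, Finset.mem_filter, Finset.mem_univ, true_and]
      show (fun i : Fin m' => g t (Fin.castLE hm' i)) = z
      funext i
      simp only [hg, Fin.castLE]
      rw [dif_pos i.isLt]
    have hinj : ∀ t₁ ∈ (Finset.univ : Finset (Fin (m - m') → Bool)),
        ∀ t₂ ∈ (Finset.univ : Finset (Fin (m - m') → Bool)), g t₁ = g t₂ → t₁ = t₂ := by
      intro t₁ _ t₂ _ h
      funext j
      have hj : m' + j.1 < m := by have := j.isLt; omega
      have := congrFun h ⟨m' + j.1, hj⟩
      simp only [hg] at this
      rw [dif_neg (by omega), dif_neg (by omega)] at this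
      have hjj : (⟨m' + j.1 - m', by omega⟩ : Fin (m - m')) = j := Fin.ext (by simp)
      rwa [hjj] at this
    calc (2 : ℕ) ^ (m - m') = (Finset.univ : Finset (Fin (m - m') → Bool)).card := by
          simp [Finset.card_univ]
      _ ≤ F.card := Finset.card_le_card_of_injOn g hmaps (fun a ha b hb => hinj a ha b hb)
  -- uniform probability of A
  have hU : prSet (uniformDist (BitStr m)) A = F.card * ((2 : ℝ) ^ m)⁻¹ := by
    unfold prSet uniformDist
    simp only [Set.indicator_apply]
    rw [Finset.sum_ite, Finset.sum_const, Finset.sum_const_zero, add_zero, nsmul_eq_mul]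
    have : (Fintype.card (BitStr m) : ℝ) = (2 : ℝ) ^ m := by
      simp [BitStr, Fintype.card_fun]
    rw [this]
    ring
  have h2m' : (2 : ℝ) ^ (-(m' : ℝ)) = ((2 : ℝ) ^ (m' : ℕ))⁻¹ := by
    rw [Real.rpow_neg (by norm_num), Real.rpow_natCast]
  have hUge : (2 : ℝ) ^ (-(m' : ℝ)) ≤ prSet (uniformDist (BitStr m)) A := by
    rw [hU, h2m']
    have h1 : ((2 : ℕ) ^ (m - m') : ℝ) ≤ (F.card : ℝ) := by exact_mod_cast hcard
    have h2 : (2 : ℝ) ^ m = (2 : ℝ) ^ (m - m') * (2 : ℝ) ^ (m' : ℕ) := by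
      rw [← pow_add]; congr 1; omega
    push_cast at h1
    rw [h2, mul_inv]
    calc ((2 : ℝ) ^ (m' : ℕ))⁻¹
        = (2 : ℝ) ^ (m - m') * (((2 : ℝ) ^ (m - m'))⁻¹ * ((2 : ℝ) ^ (m' : ℕ))⁻¹) := by
          field_simp
      _ ≤ (F.card : ℝ) * (((2 : ℝ) ^ (m - m'))⁻¹ * ((2 : ℝ) ^ (m' : ℕ))⁻¹) := by
          apply mul_le_mul_of_nonneg_right h1
          positivity
  -- the pushed distribution has positive probability on A
  have hpos : 0 < prSet (jointPush f X' Y') A := by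
    have h := hclose A
    have := abs_le.mp h
    have hlow : prSet (uniformDist (BitStr m)) A - ε ≤ prSet (jointPush f X' Y') A := by
      linarith [this.1]
    have : 0 < prSet (uniformDist (BitStr m)) A - ε := by linarith
    linarith
  -- extract a point
  have hsum : (0 : ℝ) < ∑ b, A.indicator (jointPush f X' Y') b := hpos
  obtain ⟨b, _, hb⟩ := Finset.exists_ne_zero_of_sum_ne_zero (ne_of_gt hsum)
  have hbA : b ∈ A := by
    by_contra hbn
    exact hb (Set.indicator_of_notMem hbn _)
  have hbne : jointPush f X' Y' b ≠ 0 := by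
    rwa [Set.indicator_of_mem hbA] at hb
  have : (∑ p : BitStr n × BitStr n,
      if f p.1 p.2 = b then X' p.1 * Y' p.2 else 0) ≠ 0 := hbne
  obtain ⟨p, _, hp⟩ := Finset.exists_ne_zero_of_sum_ne_zero this
  have hfp : f p.1 p.2 = b := by
    by_contra hfn
    exact hp (if_neg hfn)
  rw [if_pos hfp] at hp
  have hX'ne : X' p.1 ≠ 0 := fun h => hp (by rw [h, zero_mul])
  have hY'ne : Y' p.2 ≠ 0 := fun h => hp (by rw [h, mul_zero])
  refine ⟨p.1, p.2, ?_, ?_, ?_⟩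
  · intro hx0
    apply hX'ne
    rw [hX'eq]
    show A₀.indicator X p.1 / prSet X A₀ = 0
    rw [Set.indicator_apply]
    split <;> simp [hx0]
  · intro hy0
    apply hY'ne
    rw [hY'eq]
    show B₀.indicator Y p.2 / prSet Y B₀ = 0
    rw [Set.indicator_apply]
    split <;> simp [hy0]
  · rw [hfp]
    exact hbA
end

section
/- (Challenge-response mechanism, conditional form) Let n, k, ℓ, r be positive integers with ℓ ≥ k and k > (log₂ n)^{10}, and suppose se : {0,1}^n × {0,1}^n → ({0,1}^ℓ)^r is a function with the following two properties. (P1) For every string a ∈ {0,1}^ℓ and every pair of independent (n,k)-sources X, Y, there exist deficiency-2ℓ subsources X_a of X and Y_a of Y and an index i ∈ [r] such that se(x,y)_i = a for every (x,y) in the support of (X_a, Y_a). (P2) For every index i ∈ [r] and every pair of independent (n,k)-sources X, Y, the joint distribution (X,Y) is 2^{-10ℓ}-close to a convex combination of product distributions X̂ × Ŷ, where each X̂ is a deficiency-20ℓ subsource of X, each Ŷ is a deficiency-20ℓ subsource of Y, and se(·,·)_i is fixed to a constant on the support of X̂ × Ŷ. Define crm : {0,1}^n × {0,1}^n × {0,1}^ℓ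 → {fixed, hasent} by crm(x,y,c) = fixed if c equals some row se(x,y)_i of se(x,y), and hasent otherwise. Then for every function ch : {0,1}^n × {0,1}^n → {0,1}^ℓ and every pair of independent (n,k)-sources X, Y: (a) if ch(X,Y) is fixed to a constant, then there exist deficiency-2ℓ subsources X' of X and Y' of Y such that crm(x,y,ch(x,y)) = fixed for every (x,y) in the support of (X',Y'); and (b) if for every pair of deficiency-20ℓ subsources X̂ of X and Ŷ of Y the distribution ch(X̂,Ŷ) is ε-close to some distribution of min-entropy at least k, then Pr over (x,y) ~ (X,Y) that crm(x,y,ch(x,y)) = fixed is at most (2^{-k} + ε + 2^{-10ℓ})·r. -/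
set_option maxHeartbeats 1000000

lemma prSet_nonneg' {α : Type*} [Fintype α] {X : α → ℝ} (hX : ∀ x, 0 ≤ X x) (A : Set α) :
    0 ≤ prSet X A :=
  Finset.sum_nonneg fun x _ => Set.indicator_nonneg (fun y _ => hX y) x

lemma prSet_singleton' {α : Type*} [Fintype α] [DecidableEq α] (X : α → ℝ) (b : α) :
    prSet X {b} = X b := by
  classical
  simp [prSet, Set.indicator_apply]

lemma subsource_support' {α : Type*} [Fintype α] {X' X : α → ℝ} {d : ℝ}
    (h : IsSubsource X' X d) {x : α} (hx : X' x ≠ 0) : X x ≠ 0 := by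
  obtain ⟨A, hA, rfl⟩ := h
  intro h0
  apply hx
  simp [CondOn, Set.indicator_apply, h0]

lemma subsource_nonneg' {α : Type*} [Fintype α] {X' X : α → ℝ} {d : ℝ}
    (h : IsSubsource X' X d) (hX : ∀ x, 0 ≤ X x) (x : α) : 0 ≤ X' x := by
  obtain ⟨A, hA, rfl⟩ := h
  exact div_nonneg (Set.indicator_nonneg (fun y _ => hX y) x) (prSet_nonneg' hX A)

/-- The challenge-response mechanism (conditional form): given a
somewhere-random-rows function `se` satisfying (P1) and (P2), the response function
`crm(x,y,c) = fixed ⟺ ∃ i, se(x,y)_i = c` (a) declares a fixed challenge `fixed`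
with probability 1 on deficiency-`2ℓ` subsources, and (b) declares a robustly
high-min-entropy challenge `fixed` with probability at most `(2^{-k} + ε + 2^{-10ℓ})·r`. -/
theorem challenge_response_mechanism (n k ℓ r : ℕ)
    (hn : 0 < n) (hkpos : 0 < k) (hℓpos : 0 < ℓ) (hrpos : 0 < r)
    (hkl : k ≤ ℓ) (hkn : Real.logb 2 n ^ 10 < (k : ℝ))
    (se : BitStr n → BitStr n → Fin r → BitStr ℓ)
    (hP1 : ∀ a : BitStr ℓ, ∀ X Y : BitStr n → ℝ, IsDist X → IsDist Y →
      MinEntropyGe X k → MinEntropyGe Y k →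
      ∃ (Xa Ya : BitStr n → ℝ) (i : Fin r),
        IsSubsource Xa X (2 * ℓ) ∧ IsSubsource Ya Y (2 * ℓ) ∧
        ∀ x y, Xa x ≠ 0 → Ya y ≠ 0 → se x y i = a)
    (hP2 : ∀ i : Fin r, ∀ X Y : BitStr n → ℝ, IsDist X → IsDist Y →
      MinEntropyGe X k → MinEntropyGe Y k →
      ∃ (t : ℕ) (p : Fin t → ℝ) (Xh Yh : Fin t → BitStr n → ℝ),
        (∀ j, 0 ≤ p j) ∧ (∑ j, p j) = 1 ∧
        (∀ j, IsSubsource (Xh j) X (20 * ℓ) ∧ IsSubsource (Yh j) Y (20 * ℓ) ∧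
          ∃ c, ∀ x y, Xh j x ≠ 0 → Yh j y ≠ 0 → se x y i = c) ∧
        CloseTo (jointDist X Y) (fun q => ∑ j, p j * (Xh j q.1 * Yh j q.2))
          ((2 : ℝ) ^ (-(10 * ℓ : ℝ)))) :
    ∀ (ch : BitStr n → BitStr n → BitStr ℓ) (X Y : BitStr n → ℝ) (ε : ℝ),
      IsDist X → IsDist Y → MinEntropyGe X k → MinEntropyGe Y k →
      ((∃ a, ∀ x y, X x ≠ 0 → Y y ≠ 0 → ch x y = a) →
        ∃ X' Y' : BitStr n → ℝ,
          IsSubsource X' X (2 * ℓ) ∧ IsSubsource Y' Y (2 * ℓ) ∧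
          ∀ x y, X' x ≠ 0 → Y' y ≠ 0 → ∃ i, se x y i = ch x y) ∧
      ((∀ Xh Yh : BitStr n → ℝ,
          IsSubsource Xh X (20 * ℓ) → IsSubsource Yh Y (20 * ℓ) →
          ∃ Z : BitStr ℓ → ℝ, IsDist Z ∧ MinEntropyGe Z k ∧
            CloseTo (jointPush ch Xh Yh) Z ε) →
        prSet (jointDist X Y) {q | ∃ i, se q.1 q.2 i = ch q.1 q.2} ≤
          ((2 : ℝ) ^ (-(k : ℝ)) + ε + (2 : ℝ) ^ (-(10 * ℓ : ℝ))) * r) := by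
  intro ch X Y ε hX hY hXk hYk
  classical
  constructor
  · rintro ⟨a, ha⟩
    obtain ⟨Xa, Ya, i, hXa, hYa, hse⟩ := hP1 a X Y hX hY hXk hYk
    exact ⟨Xa, Ya, hXa, hYa, fun x y hx hy =>
      ⟨i, by rw [hse x y hx hy,
        ha x y (subsource_support' hXa hx) (subsource_support' hYa hy)]⟩⟩
  · intro hch
    set μ := jointDist X Y with hμdef
    have hμ0 : ∀ q, 0 ≤ μ q := fun q => mul_nonneg (hX.1 _) (hY.1 _)
    have hUB : prSet μ {q | ∃ i, se q.1 q.2 i = ch q.1 q.2} ≤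
        ∑ i : Fin r, prSet μ {q | se q.1 q.2 i = ch q.1 q.2} := by
      have hpt : ∀ q : BitStr n × BitStr n,
          ({q | ∃ i, se q.1 q.2 i = ch q.1 q.2} : Set _).indicator μ q ≤
          ∑ i : Fin r, ({q | se q.1 q.2 i = ch q.1 q.2} : Set _).indicator μ q := by
        intro q
        by_cases h : ∃ i, se q.1 q.2 i = ch q.1 q.2
        · obtain ⟨i, hi⟩ := h
          rw [Set.indicator_of_mem
            (show q ∈ {q | ∃ i, se q.1 q.2 i = ch q.1 q.2} from ⟨i, hi⟩)]
          have step : μ q = ({q | se q.1 q.2 i = ch q.1 q.2} : Set _).indicator μ q := by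
            rw [Set.indicator_of_mem (show q ∈ {q | se q.1 q.2 i = ch q.1 q.2} from hi)]
          rw [step]
          exact Finset.single_le_sum
            (f := fun j : Fin r => ({q | se q.1 q.2 j = ch q.1 q.2} : Set _).indicator μ q)
            (fun j _ => Set.indicator_nonneg (fun y _ => hμ0 y) q) (Finset.mem_univ i)
        · rw [Set.indicator_of_notMem
            (show q ∉ {q | ∃ i, se q.1 q.2 i = ch q.1 q.2} from h)]
          exact Finset.sum_nonneg fun i _ => Set.indicator_nonneg (fun y _ => hμ0 y) q
      calc prSet μ {q | ∃ i, se q.1 q.2 i = ch q.1 q.2}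
          ≤ ∑ q : BitStr n × BitStr n,
              ∑ i : Fin r, ({q | se q.1 q.2 i = ch q.1 q.2} : Set _).indicator μ q :=
            Finset.sum_le_sum (fun q _ => hpt q)
        _ = ∑ i : Fin r, prSet μ {q | se q.1 q.2 i = ch q.1 q.2} := Finset.sum_comm
    have hone : ∀ i : Fin r, prSet μ {q | se q.1 q.2 i = ch q.1 q.2} ≤
        (2:ℝ)^(-(k:ℝ)) + ε + (2:ℝ)^(-(10*ℓ:ℝ)) := by
      intro i
      obtain ⟨t, p, Xh, Yh, hp0, hp1, hprops, hclose⟩ := hP2 i X Y hX hY hXk hYk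
      set ν : BitStr n × BitStr n → ℝ := fun q => ∑ j, p j * (Xh j q.1 * Yh j q.2) with hνdef
      set S : Set (BitStr n × BitStr n) := {q | se q.1 q.2 i = ch q.1 q.2} with hSdef
      have hXh0 : ∀ j x, 0 ≤ Xh j x := fun j => subsource_nonneg' (hprops j).1 hX.1
      have hYh0 : ∀ j y, 0 ≤ Yh j y := fun j => subsource_nonneg' (hprops j).2.1 hY.1
      choose c hc using fun j => (hprops j).2.2
      have h1 : prSet μ S ≤ prSet ν S + (2:ℝ)^(-(10*ℓ:ℝ)) := by
        have := (abs_le.1 (hclose S)).2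
        linarith
      have h2 : prSet ν S ≤ ∑ j, p j * jointPush ch (Xh j) (Yh j) (c j) := by
        have hpt : ∀ q : BitStr n × BitStr n, S.indicator ν q ≤
            ∑ j, p j * (if ch q.1 q.2 = c j then Xh j q.1 * Yh j q.2 else 0) := by
          intro q
          by_cases hq : q ∈ S
          · rw [Set.indicator_of_mem hq]
            have hq' : se q.1 q.2 i = ch q.1 q.2 := hq
            refine Finset.sum_le_sum fun j _ => ?_
            by_cases hcj : ch q.1 q.2 = c j
            · rw [if_pos hcj]
            · rw [if_neg hcj, mul_zero]
              by_cases hx0 : Xh j q.1 = 0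
              · simp [hx0]
              by_cases hy0 : Yh j q.2 = 0
              · simp [hy0]
              exact absurd (hq'.symm.trans (hc j q.1 q.2 hx0 hy0)) hcj
          · rw [Set.indicator_of_notMem hq]
            refine Finset.sum_nonneg fun j _ => mul_nonneg (hp0 j) ?_
            split
            · exact mul_nonneg (hXh0 j _) (hYh0 j _)
            · exact le_refl 0
        have hjp : ∀ j, jointPush ch (Xh j) (Yh j) (c j) =
            ∑ q : BitStr n × BitStr n,
              if ch q.1 q.2 = c j then Xh j q.1 * Yh j q.2 else 0 := fun j => rfl
        calc prSet ν S
            ≤ ∑ q : BitStr n × BitStr n, ∑ j,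
                p j * (if ch q.1 q.2 = c j then Xh j q.1 * Yh j q.2 else 0) :=
              Finset.sum_le_sum fun q _ => hpt q
          _ = ∑ j, ∑ q : BitStr n × BitStr n,
                p j * (if ch q.1 q.2 = c j then Xh j q.1 * Yh j q.2 else 0) :=
              Finset.sum_comm
          _ = ∑ j, p j * jointPush ch (Xh j) (Yh j) (c j) := by
              refine Finset.sum_congr rfl fun j _ => ?_
              rw [hjp j, Finset.mul_sum]
      have h3 : ∀ j, jointPush ch (Xh j) (Yh j) (c j) ≤ (2:ℝ)^(-(k:ℝ)) + ε := by
        intro j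
        obtain ⟨Z, hZd, hZk, hZc⟩ := hch (Xh j) (Yh j) (hprops j).1 (hprops j).2.1
        have h4 := (abs_le.1 (hZc {c j})).2
        rw [prSet_singleton', prSet_singleton'] at h4
        have := hZk (c j)
        linarith
      have h5 : ∑ j, p j * jointPush ch (Xh j) (Yh j) (c j) ≤ (2:ℝ)^(-(k:ℝ)) + ε := by
        calc ∑ j, p j * jointPush ch (Xh j) (Yh j) (c j)
            ≤ ∑ j, p j * ((2:ℝ)^(-(k:ℝ)) + ε) :=
              Finset.sum_le_sum fun j _ => mul_le_mul_of_nonneg_left (h3 j) (hp0 j)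
          _ = (2:ℝ)^(-(k:ℝ)) + ε := by rw [← Finset.sum_mul, hp1, one_mul]
      linarith
    calc prSet μ {q | ∃ i, se q.1 q.2 i = ch q.1 q.2}
        ≤ ∑ i : Fin r, prSet μ {q | se q.1 q.2 i = ch q.1 q.2} := hUB
      _ ≤ ∑ _i : Fin r, ((2:ℝ)^(-(k:ℝ)) + ε + (2:ℝ)^(-(10*ℓ:ℝ))) :=
          Finset.sum_le_sum fun i _ => hone i
      _ = ((2:ℝ)^(-(k:ℝ)) + ε + (2:ℝ)^(-(10*ℓ:ℝ))) * r := by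
          rw [Finset.sum_const, Finset.card_univ, Fintype.card_fin, nsmul_eq_mul, mul_comm]
end

section
/- (Erdős, 1947; bipartite version) For all sufficiently large n, there exists a bipartite ⌈2 log₂ n⌉-Ramsey graph on n vertices on each side: a function B : [n] × [n] → {0,1} such that for every pair of sets S, T ⊆ [n] with |S| = |T| = ⌈2 log₂ n⌉, the function B is not constant on S × T. -/

lemma kfacts (n : ℕ) (hn : 16 ≤ n) :
    2 ≤ ⌈2 * Real.logb 2 n⌉₊ ∧ ⌈2 * Real.logb 2 n⌉₊ ≤ n ∧
    n ^ 2 ≤ 2 ^ ⌈2 * Real.logb 2 n⌉₊ := by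
  have hnR : (16:ℝ) ≤ (n:ℝ) := by exact_mod_cast hn
  have hnpos : (0:ℝ) < (n:ℝ) := by linarith
  set k := ⌈2 * Real.logb 2 n⌉₊ with hk
  refine ⟨?_, ?_, ?_⟩
  · have h1 : (1:ℝ) ≤ Real.logb 2 n := by
      rw [show (1:ℝ) = Real.logb 2 2 by simp]
      exact Real.logb_le_logb_of_le (by norm_num) (by norm_num) (by linarith)
    have : (1:ℝ) < 2 * Real.logb 2 n := by linarith
    exact Nat.lt_ceil.2 (by exact_mod_cast this)
  · set L := Nat.log 2 n with hL
    clear_value L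
    have hL4 : 4 ≤ L := hL ▸ Nat.le_log_of_pow_le (by norm_num) (show 2^4 ≤ n by omega)
    have h2L : 2 ^ L ≤ n := hL ▸ Nat.pow_log_le_self 2 (by omega)
    have hle : (n:ℝ) ≤ 2 ^ ((L:ℝ) + 1) := by
      have : (n:ℝ) < 2 ^ (L + 1) := by
        rw [hL]; exact_mod_cast Nat.lt_pow_succ_log_self (by norm_num) n
      calc (n:ℝ) ≤ 2 ^ (L+1 : ℕ) := le_of_lt this
        _ = 2 ^ ((L:ℝ) + 1) := by
            rw [← Real.rpow_natCast 2 (L+1)]; push_cast; ring_nf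
    have hlogb : Real.logb 2 n ≤ (L:ℝ) + 1 :=
      (Real.logb_le_iff_le_rpow (by norm_num) hnpos).2 hle
    have hceil : k ≤ 2 * L + 2 := by
      apply Nat.ceil_le.2
      push_cast
      linarith
    -- 2L + 2 ≤ 2 ^ L ≤ n
    have hpow : 2 * L + 2 ≤ 2 ^ L := by
      obtain ⟨m, rfl⟩ : ∃ m, L = m + 2 := ⟨L - 2, by omega⟩
      have h1 : m < 2 ^ m := Nat.lt_two_pow_self
      have h2 : 2 ^ (m + 2) = 4 * 2 ^ m := by ring
      omega
    omega
  · have h1 : 2 * Real.logb 2 n ≤ (k:ℝ) := Nat.le_ceil _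
    have h2 : Real.logb 2 ((n:ℝ)^2) ≤ (k:ℝ) := by
      rw [Real.logb_pow]; push_cast; linarith
    have h3 : ((n:ℝ))^2 ≤ (2:ℝ) ^ ((k:ℝ)) :=
      (Real.logb_le_iff_le_rpow (by norm_num) (by positivity)).1 h2
    rw [Real.rpow_natCast] at h3
    exact_mod_cast h3

open Finset in
lemma count_const {n : ℕ} (S T : Finset (Fin n)) (c : Bool) :
    ((Finset.univ : Finset (Fin n → Fin n → Bool)).filter
      (fun B => ∀ i ∈ S, ∀ j ∈ T, B i j = c)).card ≤ 2 ^ (n * n - S.card * T.card) := by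
  classical
  have h := Finset.card_le_card_of_injOn
    (s := (Finset.univ : Finset (Fin n → Fin n → Bool)).filter (fun B => ∀ i ∈ S, ∀ j ∈ T, B i j = c))
    (f := fun B : Fin n → Fin n → Bool => fun p : ((S ×ˢ T)ᶜ : Finset (Fin n × Fin n)) => B p.1.1 p.1.2)
    (t := (Finset.univ : Finset (((S ×ˢ T)ᶜ : Finset (Fin n × Fin n)) → Bool)))
    (fun _ _ => Finset.mem_univ _)
    (by
      intro B1 h1 B2 h2 hEq
      simp only [Finset.mem_coe, Finset.mem_filter] at h1 h2
      funext i j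
      by_cases hij : (i, j) ∈ S ×ˢ T
      · rw [Finset.mem_product] at hij
        rw [h1.2 i hij.1 j hij.2, h2.2 i hij.1 j hij.2]
      · have : (i, j) ∈ (S ×ˢ T)ᶜ := Finset.mem_compl.2 hij
        exact congrFun hEq ⟨(i, j), this⟩)
  calc _ ≤ _ := h
    _ = 2 ^ ((S ×ˢ T)ᶜ.card) := by
        rw [Finset.card_univ, Fintype.card_fun, Fintype.card_coe, Fintype.card_bool]
    _ ≤ 2 ^ (n * n - S.card * T.card) := by
        apply Nat.pow_le_pow_right (by norm_num)
        rw [Finset.card_compl, Finset.card_product]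
        simp [Fintype.card_prod]


/-- (Erdős 1947, bipartite version) For all sufficiently large `n`
there is a bipartite `⌈2 log₂ n⌉`-Ramsey graph on `n` vertices on each side. -/
theorem erdos_bipartite_ramsey :
    ∃ N : ℕ, ∀ n : ℕ, N ≤ n →
      ∃ B : Fin n → Fin n → Bool,
        ∀ S T : Finset (Fin n),
          S.card = ⌈2 * Real.logb 2 n⌉₊ → T.card = ⌈2 * Real.logb 2 n⌉₊ →
          ¬∃ c : Bool, ∀ i ∈ S, ∀ j ∈ T, B i j = c := by
  classical
  refine ⟨16, fun n hn => ?_⟩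
  set k := ⌈2 * Real.logb 2 (n:ℝ)⌉₊ with hkdef
  obtain ⟨hk2, hkn, hn2k⟩ := kfacts n hn
  by_contra hbad
  push_neg at hbad
  -- every B has a monochromatic rectangle
  set I : Finset ((Finset (Fin n) × Finset (Fin n)) × Bool) :=
    ((Finset.univ.powersetCard k) ×ˢ (Finset.univ.powersetCard k)) ×ˢ Finset.univ with hI
  set f : (Finset (Fin n) × Finset (Fin n)) × Bool → Finset (Fin n → Fin n → Bool) :=
    fun q => Finset.univ.filter (fun B => ∀ i ∈ q.1.1, ∀ j ∈ q.1.2, B i j = q.2) with hf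
  have hsub : (Finset.univ : Finset (Fin n → Fin n → Bool)) ⊆ I.biUnion f := by
    intro B _
    obtain ⟨S, T, hS, hT, c, hc⟩ := hbad B
    refine Finset.mem_biUnion.2 ⟨((S, T), c), ?_, ?_⟩
    · refine Finset.mem_product.2 ⟨Finset.mem_product.2 ⟨?_, ?_⟩, Finset.mem_univ _⟩
      · exact Finset.mem_powersetCard_univ.2 hS
      · exact Finset.mem_powersetCard_univ.2 hT
    · exact Finset.mem_filter.2 ⟨Finset.mem_univ _, hc⟩
  set C := n.choose k with hC
  set M := 2 ^ (n * n - k * k) with hM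
  have hcount : 2 ^ (n * n) ≤ C * C * 2 * M := by
    have h1 : (Finset.univ : Finset (Fin n → Fin n → Bool)).card ≤ (I.biUnion f).card :=
      Finset.card_le_card hsub
    have h2 : (I.biUnion f).card ≤ ∑ q ∈ I, (f q).card := Finset.card_biUnion_le
    have h3 : ∑ q ∈ I, (f q).card ≤ ∑ q ∈ I, M := by
      apply Finset.sum_le_sum
      rintro ⟨⟨S, T⟩, c⟩ hq
      simp only [hI, Finset.mem_product, Finset.mem_powersetCard_univ] at hq
      have := count_const S T c
      rw [hq.1.1, hq.1.2] at this
      exact this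
    have h4 : ∑ q ∈ I, M = C * C * 2 * M := by
      rw [Finset.sum_const, smul_eq_mul]
      congr 1
      simp [hI, Finset.card_product, Finset.card_powersetCard, hC]
    have h5 : (Finset.univ : Finset (Fin n → Fin n → Bool)).card = 2 ^ (n * n) := by
      rw [Finset.card_univ, Fintype.card_fun, Fintype.card_fun]
      simp [pow_mul]
    omega
  -- arithmetic contradiction
  have hfact : 2 ≤ Nat.factorial k := by
    calc 2 = Nat.factorial 2 := by norm_num
      _ ≤ Nat.factorial k := Nat.factorial_le hk2
  have h2C : 2 * C ≤ n ^ k := by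
    calc 2 * C ≤ Nat.factorial k * C := Nat.mul_le_mul_right C hfact
      _ = n.descFactorial k := (Nat.descFactorial_eq_factorial_mul_choose n k).symm
      _ ≤ n ^ k := Nat.descFactorial_le_pow n k
  have hsq : 4 * (C * C) ≤ 2 ^ (k * k) := by
    calc 4 * (C * C) = (2 * C) * (2 * C) := by ring
      _ ≤ n ^ k * n ^ k := Nat.mul_le_mul h2C h2C
      _ = (n ^ 2) ^ k := by ring
      _ ≤ (2 ^ k) ^ k := Nat.pow_le_pow_left hn2k k
      _ = 2 ^ (k * k) := by rw [← pow_mul]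
  have hkk : k * k ≤ n * n := Nat.mul_le_mul hkn hkn
  have hsplit : 2 ^ (k * k) * M = 2 ^ (n * n) := by
    rw [hM, ← pow_add]
    congr 1
    omega
  have hfin : 4 * (C * C) * M ≤ 2 ^ (n * n) := by
    rw [← hsplit]
    exact Nat.mul_le_mul_right M hsq
  have hpos : 0 < 2 ^ (n * n) := Nat.pow_pos (by norm_num)
  have hdbl : 2 * 2 ^ (n * n) ≤ 2 * (C * C * 2 * M) := Nat.mul_le_mul_left 2 hcount
  have heq : 2 * (C * C * 2 * M) = 4 * (C * C) * M := by ring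
  omega
end

section
/- (Ramsey, 1928) There does not exist a graph on n vertices that is (log₂ n)/2-Ramsey: every simple graph on n ≥ 2 vertices contains a clique or an independent set of size at least (log₂ n)/2. -/


lemma choose_le_two_pow' (n k : ℕ) : n.choose k ≤ 2 ^ n := by
  rcases le_or_gt k n with h | h
  · calc n.choose k ≤ ∑ i ∈ Finset.range (n+1), n.choose i :=
        Finset.single_le_sum (fun i _ => Nat.zero_le _) (Finset.mem_range.mpr (by omega))
      _ = 2 ^ n := Nat.sum_range_choose n
  · simp [Nat.choose_eq_zero_of_lt h]

lemma ramsey_aux (m : ℕ) : ∀ s t : ℕ, s + t ≤ m →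
    ∀ {V : Type} [Fintype V] [DecidableEq V] (G : SimpleGraph V) (A : Finset V),
    (s + t).choose s ≤ A.card →
    ∃ S : Finset V, S ⊆ A ∧
      ((S.card = s + 1 ∧ G.IsClique (S : Set V)) ∨
       (S.card = t + 1 ∧ (S : Set V).Pairwise (fun a b => ¬ G.Adj a b))) := by
  induction m with
  | zero =>
    intro s t hst V _ _ G A hA
    obtain ⟨hs, ht⟩ : s = 0 ∧ t = 0 := by omega
    subst hs; subst ht
    simp only [Nat.choose_self] at hA
    obtain ⟨v, hv⟩ := Finset.card_pos.mp (show 0 < A.card by omega)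
    exact ⟨{v}, Finset.singleton_subset_iff.mpr hv, Or.inl ⟨rfl, by rw [Finset.coe_singleton]; exact Set.pairwise_singleton v _⟩⟩
  | succ m ih =>
    intro s t hst V _ _ G A hA
    classical
    rcases Nat.eq_zero_or_pos s with hs | hs
    · subst hs
      simp only [Nat.zero_add, Nat.choose_zero_right] at hA
      obtain ⟨v, hv⟩ := Finset.card_pos.mp (show 0 < A.card by omega)
      exact ⟨{v}, Finset.singleton_subset_iff.mpr hv, Or.inl ⟨rfl, by rw [Finset.coe_singleton]; exact Set.pairwise_singleton v _⟩⟩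
    rcases Nat.eq_zero_or_pos t with ht | ht
    · subst ht
      rw [Nat.add_zero, Nat.choose_self] at hA
      obtain ⟨v, hv⟩ := Finset.card_pos.mp (show 0 < A.card by omega)
      exact ⟨{v}, Finset.singleton_subset_iff.mpr hv, Or.inr ⟨rfl, by rw [Finset.coe_singleton]; exact Set.pairwise_singleton v _⟩⟩
    obtain ⟨s', rfl⟩ := Nat.exists_eq_succ_of_ne_zero (by omega : s ≠ 0)
    obtain ⟨t', rfl⟩ := Nat.exists_eq_succ_of_ne_zero (by omega : t ≠ 0)
    simp only [Nat.succ_eq_add_one] at hA hst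
    have hpos : 0 < (s' + 1 + (t' + 1)).choose (s' + 1) := Nat.choose_pos (by omega)
    have hcardA : 1 ≤ A.card := by omega
    obtain ⟨v, hv⟩ := Finset.card_pos.mp (show 0 < A.card by omega)
    set N := (A.erase v).filter (fun u => G.Adj v u) with hN
    set M := (A.erase v).filter (fun u => ¬ G.Adj v u) with hM
    have hNM : N.card + M.card = A.card - 1 := by
      rw [hN, hM, Finset.card_filter_add_card_filter_not, Finset.card_erase_of_mem hv]
    have hchoose : (s' + 1 + (t' + 1)).choose (s' + 1)
        = (s' + (t' + 1)).choose s' + (s' + 1 + t').choose (s' + 1) := by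
      rw [show s' + 1 + (t' + 1) = s' + t' + 1 + 1 from by omega,
        show s' + (t' + 1) = s' + t' + 1 from by omega,
        show s' + 1 + t' = s' + t' + 1 from by omega]
      exact Nat.choose_succ_succ (s' + t' + 1) s'
    have hsplit : (s' + (t' + 1)).choose s' ≤ N.card ∨ (s' + 1 + t').choose (s' + 1) ≤ M.card := by
      by_contra h
      push_neg at h
      omega
    rcases hsplit with hcase | hcase
    · obtain ⟨S, hSsub, hS⟩ := ih s' (t' + 1) (by omega) G N hcase
      rcases hS with ⟨hcard, hclique⟩ | ⟨hcard, hindep⟩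
      · refine ⟨insert v S, ?_, Or.inl ⟨?_, ?_⟩⟩
        · intro x hx
          rcases Finset.mem_insert.mp hx with rfl | hx
          · exact hv
          · exact Finset.mem_of_mem_erase (Finset.mem_of_mem_filter _ (hSsub hx))
        · have hvS : v ∉ S := fun h => (Finset.notMem_erase v A) (Finset.mem_of_mem_filter _ (hSsub h))
          rw [Finset.card_insert_of_notMem hvS, hcard]
        · rw [Finset.coe_insert]
          exact hclique.insert (fun b hb _ => (Finset.mem_filter.mp (hSsub hb)).2)
      · exact ⟨S, hSsub.trans (fun x hx => Finset.mem_of_mem_erase (Finset.mem_of_mem_filter _ hx)),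
          Or.inr ⟨hcard, hindep⟩⟩
    · obtain ⟨S, hSsub, hS⟩ := ih (s' + 1) t' (by omega) G M hcase
      rcases hS with ⟨hcard, hclique⟩ | ⟨hcard, hindep⟩
      · exact ⟨S, hSsub.trans (fun x hx => Finset.mem_of_mem_erase (Finset.mem_of_mem_filter _ hx)),
          Or.inl ⟨hcard, hclique⟩⟩
      · refine ⟨insert v S, ?_, Or.inr ⟨?_, ?_⟩⟩
        · intro x hx
          rcases Finset.mem_insert.mp hx with rfl | hx
          · exact hv
          · exact Finset.mem_of_mem_erase (Finset.mem_of_mem_filter _ (hSsub hx))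
        · have hvS : v ∉ S := fun h => (Finset.notMem_erase v A) (Finset.mem_of_mem_filter _ (hSsub h))
          rw [Finset.card_insert_of_notMem hvS, hcard]
        · rw [Finset.coe_insert]
          have hsym : Symmetric (fun a b => ¬ G.Adj a b) := fun a b hab h => hab h.symm
          haveI : Std.Symm (fun a b => ¬ G.Adj a b) := ⟨fun a b h => hsym h⟩
          refine (Set.pairwise_insert_of_symmetric).mpr
            ⟨hindep, fun b hb _ => (Finset.mem_filter.mp (hSsub hb)).2⟩

/-- (Ramsey 1928) Every simple graph on `n ≥ 2` vertices contains a
clique or an independent set of size at least `(log₂ n)/2`. -/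
theorem ramsey_no_half_log_ramsey_graph (n : ℕ) (hn : 2 ≤ n)
    (G : SimpleGraph (Fin n)) :
    ∃ S : Finset (Fin n), Real.logb 2 n / 2 ≤ (S.card : ℝ) ∧
      (G.IsClique (S : Set (Fin n)) ∨ G.IsIndepSet' (S : Set (Fin n))) := by
  classical
  set k := Nat.log 2 n / 2 with hk
  have hL : 2 * k ≤ Nat.log 2 n := by omega
  have hpow : 2 ^ (2 * k) ≤ n :=
    le_trans (Nat.pow_le_pow_right (by norm_num) hL) (Nat.pow_log_le_self 2 (by omega))
  have hchoose : (k + k).choose k ≤ n := by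
    calc (k + k).choose k ≤ 2 ^ (k + k) := choose_le_two_pow' _ _
      _ = 2 ^ (2 * k) := by ring_nf
      _ ≤ n := hpow
  obtain ⟨S, -, hS⟩ := ramsey_aux (k + k) k k le_rfl G Finset.univ
    (by simpa using hchoose)
  have hn2 : n < 2 ^ (2 * k + 2) :=
    lt_of_lt_of_le (Nat.lt_pow_succ_log_self (by norm_num) n)
      (Nat.pow_le_pow_right (by norm_num) (by omega))
  have hlogb : Real.logb 2 n ≤ 2 * k + 2 := by
    have h1 : (n : ℝ) ≤ (2 : ℝ) ^ (2 * k + 2 : ℕ) := by exact_mod_cast hn2.le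
    calc Real.logb 2 n ≤ Real.logb 2 ((2 : ℝ) ^ (2 * k + 2 : ℕ)) := by
          exact Real.logb_le_logb_of_le (by norm_num) (by positivity) h1
      _ = (2 * k + 2 : ℕ) := by
          rw [Real.logb_pow]
          simp [Real.logb_self_eq_one]
      _ = 2 * (k : ℝ) + 2 := by push_cast; ring
  have hcard_bound : Real.logb 2 n / 2 ≤ (k : ℝ) + 1 := by linarith
  rcases hS with ⟨hcard, hclique⟩ | ⟨hcard, hindep⟩
  · exact ⟨S, by rw [hcard]; push_cast; linarith, Or.inl hclique⟩
  · exact ⟨S, by rw [hcard]; push_cast; linarith, Or.inr hindep⟩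
end
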